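/- Let f(X) = X (X^T X)^{-1} X^T denote the orthogonal projection onto the column space of a full-column-rank matrix X ∈ R^{D×d}. If X and Y both have smallest singular value at least s > 0, then ‖f(X) − f(Y)‖_F ≤ (√2 / s) ‖X − Y‖_F. -/

import Mathlib

open MeasureTheory Filter Topology Matrix

noncomputable def frobSq {m n : ℕ} (A : Matrix (Fin m) (Fin n) ℝ) : ℝ :=
  ∑ i, ∑ j, A i j ^ 2

noncomputable def frob {m n : ℕ} (A : Matrix (Fin m) (Fin n) ℝ) : ℝ :=
  Real.sqrt (frobSq A)

noncomputable def frobInner {m n : ℕ} (A B : Matrix (Fin m) (Fin n) ℝ) : ℝ :=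
  ∑ i, ∑ j, A i j * B i j

noncomputable def evnorm {n : ℕ} (v : Fin n → ℝ) : ℝ :=
  Real.sqrt (∑ i, v i ^ 2)

noncomputable def sigmaMin {m n : ℕ} (A : Matrix (Fin m) (Fin n) ℝ) : ℝ :=
  sInf {r : ℝ | ∃ v : Fin n → ℝ, evnorm v = 1 ∧ r = evnorm (A.mulVec v)}

noncomputable def sigmaMax {m n : ℕ} (A : Matrix (Fin m) (Fin n) ℝ) : ℝ :=
  sSup {r : ℝ | ∃ v : Fin n → ℝ, evnorm v = 1 ∧ r = evnorm (A.mulVec v)}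

noncomputable def proj {m n : ℕ} (X : Matrix (Fin m) (Fin n) ℝ) : Matrix (Fin m) (Fin m) ℝ :=
  X * (Xᵀ * X)⁻¹ * Xᵀ

noncomputable def jac {n m : ℕ} (f : (Fin n → ℝ) → (Fin m → ℝ)) (z : Fin n → ℝ) :
    Matrix (Fin m) (Fin n) ℝ :=
  Matrix.of fun i j => fderiv ℝ f z (Pi.single j 1) i

noncomputable def hess {n : ℕ} (f : (Fin n → ℝ) → ℝ) (z : Fin n → ℝ) :
    Matrix (Fin n) (Fin n) ℝ :=
  Matrix.of fun k l => fderiv ℝ (fun x => fderiv ℝ f x (Pi.single l 1)) z (Pi.single k 1)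

noncomputable def rho {d D : ℕ} (Ω : Set (Fin d → ℝ)) (φ ψ : (Fin d → ℝ) → (Fin D → ℝ)) : ℝ :=
  Real.sqrt (∫ z in Ω,
    (evnorm (φ z - ψ z) ^ 2 + (1/2) * frobSq (proj (jac φ z) - proj (jac ψ z))))
/-!
Write `P = proj X`, `Q = proj Y` and `X⁺ = (XᵀX)⁻¹Xᵀ`, so that `P = X X⁺`. Then
`P - Q = (1 - Q) P - Q (1 - P)`, and the two terms are Frobenius-orthogonal, so their squared
norms add. Since `(1 - Q) Y = 0`, `(1 - Q) P = (1 - Q)(X - Y) X⁺`; here `1 - Q` is a contraction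
and `X⁺` has operator norm at most `1 / s`, so `‖(1 - Q) P‖_F ≤ ‖X - Y‖_F / s`, and symmetrically
for the other term. Adding the two squares gives the factor `√2`.
-/

section Frobenius

variable {m n k : ℕ}

lemma frobSq_eq_trace (A : Matrix (Fin m) (Fin n) ℝ) : frobSq A = trace (Aᵀ * A) := by
  simp only [frobSq, trace, diag, mul_apply, transpose_apply, sq]
  exact Finset.sum_comm

lemma frobSq_eq_sum_dotProduct (A : Matrix (Fin m) (Fin n) ℝ) : frobSq A = ∑ i, A i ⬝ᵥ A i := by
  simp only [frobSq, dotProduct, sq]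

lemma frobSq_nonneg (A : Matrix (Fin m) (Fin n) ℝ) : 0 ≤ frobSq A :=
  Finset.sum_nonneg fun _ _ => Finset.sum_nonneg fun _ _ => sq_nonneg _

lemma frobSq_transpose (A : Matrix (Fin m) (Fin n) ℝ) : frobSq Aᵀ = frobSq A :=
  Finset.sum_comm

lemma frobSq_neg (A : Matrix (Fin m) (Fin n) ℝ) : frobSq (-A) = frobSq A := by
  simp only [frobSq, Matrix.neg_apply, neg_sq]

lemma frobSq_sub_comm (A B : Matrix (Fin m) (Fin n) ℝ) : frobSq (A - B) = frobSq (B - A) := by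
  rw [← neg_sub, frobSq_neg]

lemma frobSq_add_of_transpose_mul_eq_zero {A B : Matrix (Fin m) (Fin n) ℝ} (h : Aᵀ * B = 0) :
    frobSq (A + B) = frobSq A + frobSq B := by
  have h' : Bᵀ * A = 0 := by simpa using congrArg transpose h
  simp only [frobSq_eq_trace, transpose_add, Matrix.add_mul, Matrix.mul_add, h, h', trace_add,
    trace_zero]
  ring

lemma frobSq_mul_le_of_dotProduct_vecMul_le {B : Matrix (Fin n) (Fin k) ℝ} {c : ℝ}
    (hB : ∀ v, c * ((v ᵥ* B) ⬝ᵥ (v ᵥ* B)) ≤ v ⬝ᵥ v) (M : Matrix (Fin m) (Fin n) ℝ) :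
    c * frobSq (M * B) ≤ frobSq M := by
  simp only [frobSq_eq_sum_dotProduct, Finset.mul_sum, mul_apply_eq_vecMul]
  exact Finset.sum_le_sum fun i _ => hB (M i)

end Frobenius

section OrthogonalProjection

variable {m k : ℕ} {P Q R : Matrix (Fin m) (Fin m) ℝ}

lemma frobSq_one_sub_mul_le (hR : R.IsSymm) (hR' : IsIdempotentElem R)
    (N : Matrix (Fin m) (Fin k) ℝ) : frobSq ((1 - R) * N) ≤ frobSq N := by
  have hsplit : frobSq N = frobSq ((1 - R) * N) + frobSq (R * N) := by
    have hN : N = (1 - R) * N + R * N := by rw [Matrix.sub_mul, Matrix.one_mul, sub_add_cancel]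
    conv_lhs => rw [hN]
    refine frobSq_add_of_transpose_mul_eq_zero ?_
    rw [transpose_mul, transpose_sub, transpose_one, hR.eq, Matrix.mul_assoc,
      ← Matrix.mul_assoc (1 - R), hR'.one_sub_mul_self, Matrix.zero_mul, Matrix.mul_zero]
  linarith [frobSq_nonneg (R * N)]

lemma frobSq_sub_eq_of_isSymm_of_isIdempotentElem (hP : P.IsSymm)
    (hQ : Q.IsSymm) (hQ' : IsIdempotentElem Q) :
    frobSq (P - Q) = frobSq ((1 - Q) * P) + frobSq ((1 - P) * Q) := by
  have hsplit : P - Q = (1 - Q) * P + -(Q * (1 - P)) := by noncomm_ring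
  have horth : ((1 - Q) * P)ᵀ * -(Q * (1 - P)) = 0 := by
    rw [transpose_mul, transpose_sub, transpose_one, hP.eq, hQ.eq, Matrix.mul_neg,
      Matrix.mul_assoc, ← Matrix.mul_assoc (1 - Q), hQ'.one_sub_mul_self, Matrix.zero_mul,
      Matrix.mul_zero, neg_zero]
  rw [hsplit, frobSq_add_of_transpose_mul_eq_zero horth, frobSq_neg, ← frobSq_transpose (Q * _),
    transpose_mul, transpose_sub, transpose_one, hP.eq, hQ.eq]

end OrthogonalProjection

section SingularValue

variable {D d : ℕ} {s : ℝ} {X : Matrix (Fin D) (Fin d) ℝ}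

lemma dotProduct_self_nonneg (v : Fin d → ℝ) : 0 ≤ v ⬝ᵥ v :=
  Finset.sum_nonneg fun _ _ => mul_self_nonneg _

lemma dotProduct_self_pos {v : Fin d → ℝ} (hv : v ≠ 0) : 0 < v ⬝ᵥ v :=
  (dotProduct_self_nonneg v).lt_of_ne' (dotProduct_self_eq_zero.not.mpr hv)

lemma evnorm_sq (v : Fin d → ℝ) : evnorm v ^ 2 = v ⬝ᵥ v := by
  rw [evnorm, Real.sq_sqrt (Finset.sum_nonneg fun _ _ => sq_nonneg _)]
  simp only [dotProduct, sq]

lemma evnorm_smul (c : ℝ) (v : Fin d → ℝ) : evnorm (c • v) = |c| * evnorm v := by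
  simp only [evnorm, Pi.smul_apply, smul_eq_mul, mul_pow, ← Finset.mul_sum]
  rw [Real.sqrt_mul (sq_nonneg c), Real.sqrt_sq_eq_abs]

lemma sq_mul_dotProduct_self_le (hs : 0 ≤ s) (hX : s ≤ sigmaMin X) (v : Fin d → ℝ) :
    s ^ 2 * (v ⬝ᵥ v) ≤ (X *ᵥ v) ⬝ᵥ (X *ᵥ v) := by
  rcases eq_or_ne v 0 with rfl | hv
  · simp
  have hpos : 0 < evnorm v := Real.sqrt_pos.mpr <| by
    simpa only [dotProduct, sq] using dotProduct_self_pos hv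
  have hunit : evnorm ((evnorm v)⁻¹ • v) = 1 := by
    rw [evnorm_smul, abs_inv, abs_of_pos hpos, inv_mul_cancel₀ hpos.ne']
  have hbdd : BddBelow {r : ℝ | ∃ u : Fin d → ℝ, evnorm u = 1 ∧ r = evnorm (X *ᵥ u)} :=
    ⟨0, fun _ ⟨_, _, hr⟩ => hr ▸ Real.sqrt_nonneg _⟩
  have hle : s ≤ (evnorm v)⁻¹ * evnorm (X *ᵥ v) := by
    calc s ≤ sigmaMin X := hX
      _ ≤ evnorm (X *ᵥ ((evnorm v)⁻¹ • v)) := csInf_le hbdd ⟨_, hunit, rfl⟩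
      _ = (evnorm v)⁻¹ * evnorm (X *ᵥ v) := by
        rw [mulVec_smul, evnorm_smul, abs_inv, abs_of_pos hpos]
  rw [← evnorm_sq, ← evnorm_sq, ← mul_pow]
  rw [← div_eq_inv_mul, le_div_iff₀ hpos] at hle
  exact pow_le_pow_left₀ (mul_nonneg hs hpos.le) hle 2

end SingularValue

section PseudoInverse

variable {D d : ℕ} {s : ℝ}

noncomputable def pinv (X : Matrix (Fin D) (Fin d) ℝ) : Matrix (Fin d) (Fin D) ℝ :=
  (Xᵀ * X)⁻¹ * Xᵀ

lemma dotProduct_transpose_mul_self_mulVec (X : Matrix (Fin D) (Fin d) ℝ) (u w : Fin d → ℝ) :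
    u ⬝ᵥ ((Xᵀ * X) *ᵥ w) = (X *ᵥ u) ⬝ᵥ (X *ᵥ w) := by
  rw [← mulVec_mulVec, dotProduct_mulVec, vecMul_transpose]

lemma isUnit_det_transpose_mul_self {X : Matrix (Fin D) (Fin d) ℝ} (hs : 0 < s)
    (hX : s ≤ sigmaMin X) : IsUnit (Xᵀ * X).det := by
  rw [isUnit_iff_ne_zero]
  intro hdet
  obtain ⟨v, hv, hGv⟩ := exists_mulVec_eq_zero_iff.mpr hdet
  have hXv : (X *ᵥ v) ⬝ᵥ (X *ᵥ v) = 0 := by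
    rw [← dotProduct_transpose_mul_self_mulVec, hGv, dotProduct_zero]
  have hlow := sq_mul_dotProduct_self_le hs.le hX v
  rw [hXv] at hlow
  exact hlow.not_gt (mul_pos (pow_pos hs 2) (dotProduct_self_pos hv))

lemma transpose_pinv (X : Matrix (Fin D) (Fin d) ℝ) : (pinv X)ᵀ = X * (Xᵀ * X)⁻¹ := by
  rw [pinv, transpose_mul, transpose_transpose, transpose_nonsing_inv, transpose_mul,
    transpose_transpose]

lemma pinv_mul_self {X : Matrix (Fin D) (Fin d) ℝ} (hX : IsUnit (Xᵀ * X).det) :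
    pinv X * X = 1 := by
  rw [pinv, Matrix.mul_assoc, nonsing_inv_mul _ hX]

/-- With `u = (XᵀX)⁻¹ w`, `|X u|² = u ⬝ w ≤ |u| |w|` and `s |u| ≤ |X u|`. -/
lemma sq_mul_dotProduct_vecMul_pinv_le {X : Matrix (Fin D) (Fin d) ℝ} (hs : 0 < s)
    (hX : s ≤ sigmaMin X) (w : Fin d → ℝ) :
    s ^ 2 * ((w ᵥ* pinv X) ⬝ᵥ (w ᵥ* pinv X)) ≤ w ⬝ᵥ w := by
  set u := (Xᵀ * X)⁻¹ *ᵥ w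
  have hrow : w ᵥ* pinv X = X *ᵥ u := by
    rw [← mulVec_transpose, transpose_pinv, ← mulVec_mulVec]
  have hGu : (Xᵀ * X) *ᵥ u = w := by
    rw [mulVec_mulVec, mul_nonsing_inv _ (isUnit_det_transpose_mul_self hs hX), one_mulVec]
  have hnorm : (X *ᵥ u) ⬝ᵥ (X *ᵥ u) = u ⬝ᵥ w := by
    rw [← dotProduct_transpose_mul_self_mulVec, hGu]
  have hlow : s ^ 2 * (u ⬝ᵥ u) ≤ u ⬝ᵥ w := hnorm ▸ sq_mul_dotProduct_self_le hs.le hX u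
  have hCS : (u ⬝ᵥ w) ^ 2 ≤ (u ⬝ᵥ u) * (w ⬝ᵥ w) := by
    simpa only [dotProduct, sq] using Finset.sum_mul_sq_le_sq_mul_sq Finset.univ u w
  rw [hrow, hnorm]
  rcases (hnorm ▸ dotProduct_self_nonneg (X *ᵥ u)).eq_or_lt with h0 | h0
  · rw [← h0, mul_zero]
    exact dotProduct_self_nonneg w
  refine le_of_mul_le_mul_left ?_ h0
  calc (u ⬝ᵥ w) * (s ^ 2 * (u ⬝ᵥ w)) = s ^ 2 * (u ⬝ᵥ w) ^ 2 := by ring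
    _ ≤ s ^ 2 * ((u ⬝ᵥ u) * (w ⬝ᵥ w)) := by gcongr
    _ = (s ^ 2 * (u ⬝ᵥ u)) * (w ⬝ᵥ w) := by ring
    _ ≤ (u ⬝ᵥ w) * (w ⬝ᵥ w) := by gcongr; exact dotProduct_self_nonneg w

end PseudoInverse

section Projection

variable {D d : ℕ} {s : ℝ} {X Y : Matrix (Fin D) (Fin d) ℝ}

lemma proj_eq_mul_pinv (X : Matrix (Fin D) (Fin d) ℝ) : proj X = X * pinv X :=
  Matrix.mul_assoc _ _ _

lemma proj_isSymm (X : Matrix (Fin D) (Fin d) ℝ) : (proj X).IsSymm := by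
  rw [IsSymm, proj_eq_mul_pinv, transpose_mul, transpose_pinv, pinv, Matrix.mul_assoc]

lemma proj_mul_self (hX : IsUnit (Xᵀ * X).det) : proj X * X = X := by
  rw [proj_eq_mul_pinv, Matrix.mul_assoc, pinv_mul_self hX, Matrix.mul_one]

lemma proj_isIdempotentElem (hX : IsUnit (Xᵀ * X).det) : IsIdempotentElem (proj X) := by
  rw [IsIdempotentElem]
  nth_rw 2 [proj_eq_mul_pinv]
  rw [← Matrix.mul_assoc, proj_mul_self hX, proj_eq_mul_pinv]

lemma one_sub_proj_mul_proj (X : Matrix (Fin D) (Fin d) ℝ) (hY : IsUnit (Yᵀ * Y).det) :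
    (1 - proj Y) * proj X = (1 - proj Y) * (X - Y) * pinv X := by
  rw [Matrix.mul_sub (1 - proj Y) X Y, Matrix.sub_mul 1 (proj Y) Y, proj_mul_self hY,
    Matrix.one_mul, sub_self, sub_zero, proj_eq_mul_pinv X, Matrix.mul_assoc]

lemma sq_mul_frobSq_one_sub_proj_mul_proj_le (hs : 0 < s) (hX : s ≤ sigmaMin X)
    (hY : IsUnit (Yᵀ * Y).det) : s ^ 2 * frobSq ((1 - proj Y) * proj X) ≤ frobSq (X - Y) := by
  rw [one_sub_proj_mul_proj X hY]
  calc _ ≤ frobSq ((1 - proj Y) * (X - Y)) :=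
        frobSq_mul_le_of_dotProduct_vecMul_le (sq_mul_dotProduct_vecMul_pinv_le hs hX) _
    _ ≤ frobSq (X - Y) := frobSq_one_sub_mul_le (proj_isSymm Y) (proj_isIdempotentElem hY) _

end Projection

theorem stmt2 {D d : ℕ} (s : ℝ) (hs : 0 < s) (X Y : Matrix (Fin D) (Fin d) ℝ)
    (hX : s ≤ sigmaMin X) (hY : s ≤ sigmaMin Y) :
    frob (proj X - proj Y) ≤ (Real.sqrt 2 / s) * frob (X - Y) := by
  have hXu := isUnit_det_transpose_mul_self hs hX
  have hYu := isUnit_det_transpose_mul_self hs hY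
  have hsq : frobSq (proj X - proj Y) * s ^ 2 ≤ 2 * frobSq (X - Y) := by
    have hXY := sq_mul_frobSq_one_sub_proj_mul_proj_le hs hX hYu
    have hYX := sq_mul_frobSq_one_sub_proj_mul_proj_le hs hY hXu
    rw [frobSq_sub_comm] at hYX
    rw [frobSq_sub_eq_of_isSymm_of_isIdempotentElem (proj_isSymm X) (proj_isSymm Y)
      (proj_isIdempotentElem hYu)]
    linarith
  rw [frob, frob, div_mul_eq_mul_div, le_div_iff₀ hs, ← Real.sqrt_sq hs.le,
    ← Real.sqrt_mul (frobSq_nonneg _), ← Real.sqrt_mul zero_le_two]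
  exact Real.sqrt_le_sqrt hsq
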